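/- Let n ≥ 2, T > 0 and t₀ ∈ (0,T]. Let B : [0,T] → ℝ^{n×n} and let L : [0,T] → ℝ^{n×n} be differentiable at t₀ with each L(t) Minkowski-symmetric, and suppose the Riccati equation t₀ L′(t₀) + L(t₀)² − L(t₀) + t₀² B(t₀) = 0 holds. Suppose x₀ ∈ ℝⁿ is a nonzero null vector with L(t₀) x₀ = λ x₀ for some λ ∈ ℝ. Define f(t) = −⟨L(t) x₀, x₀⟩. Then t₀ f′(t₀) = t₀² ⟨B(t₀) x₀, x₀⟩; in particular, if B(t₀) is null negative-definite then f′(t₀) < 0. -/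

import Mathlib

open Matrix Set

noncomputable section

/-- The Minkowski inner product on `ℝⁿ`: `⟨v,w⟩ = -v₀w₀ + Σ_{j≥1} vⱼwⱼ`. -/
def mink {n : ℕ} (v w : Fin n → ℝ) : ℝ :=
  ∑ j : Fin n, (if (j : ℕ) = 0 then -(v j * w j) else v j * w j)

/-- A vector is null if its Minkowski square vanishes. -/
def IsNull {n : ℕ} (v : Fin n → ℝ) : Prop := mink v v = 0

/-- A matrix is symmetric with respect to the Minkowski inner product. -/
def MinkSymm {n : ℕ} (L : Matrix (Fin n) (Fin n) ℝ) : Prop :=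
  ∀ v w : Fin n → ℝ, mink (L.mulVec v) w = mink v (L.mulVec w)

/-- A matrix is null negative-definite: `⟨Lv,v⟩ < 0` for all nonzero null `v`. -/
def NullNegDef {n : ℕ} (L : Matrix (Fin n) (Fin n) ℝ) : Prop :=
  ∀ v : Fin n → ℝ, v ≠ 0 → IsNull v → mink (L.mulVec v) v < 0

/-- A matrix is null negative semi-definite: `⟨Lv,v⟩ ≤ 0` for all null `v`. -/
def NullNegSemi {n : ℕ} (L : Matrix (Fin n) (Fin n) ℝ) : Prop :=
  ∀ v : Fin n → ℝ, IsNull v → mink (L.mulVec v) v ≤ 0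

/-- Entrywise derivative (within a set) of a matrix-valued function of a real variable. -/
def matDerivWithin {n : ℕ} (L : ℝ → Matrix (Fin n) (Fin n) ℝ) (s : Set ℝ) (t : ℝ) :
    Matrix (Fin n) (Fin n) ℝ :=
  Matrix.of fun i j => derivWithin (fun u => L u i j) s t

/-! Pairing the Riccati equation with the null eigenvector `x₀` kills the term
`⟨(L² - L)x₀, x₀⟩ = (λ² - λ)⟨x₀, x₀⟩`, leaving `t₀⟨L′x₀, x₀⟩ + t₀²⟨B x₀, x₀⟩ = 0`;
and `f′(t₀) = -⟨L′x₀, x₀⟩` since `⟨L(t)x₀, x₀⟩` is linear in the entries of `L(t)`. -/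

section Mink

variable {n : ℕ}

lemma mink_eq_sum_mul (u w : Fin n → ℝ) :
    mink u w = ∑ j : Fin n, (if (j : ℕ) = 0 then -1 else 1) * u j * w j := by
  unfold mink
  refine Finset.sum_congr rfl fun j _ => ?_
  split_ifs <;> ring

lemma mink_add_left (u v w : Fin n → ℝ) : mink (u + v) w = mink u w + mink v w := by
  simp only [mink_eq_sum_mul, ← Finset.sum_add_distrib, Pi.add_apply]
  exact Finset.sum_congr rfl fun j _ => by ring

lemma mink_smul_left (a : ℝ) (v w : Fin n → ℝ) : mink (a • v) w = a * mink v w := by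
  simp only [mink_eq_sum_mul, Finset.mul_sum, Pi.smul_apply, smul_eq_mul]
  exact Finset.sum_congr rfl fun j _ => by ring

lemma mink_zero_left (w : Fin n → ℝ) : mink 0 w = 0 := by
  simpa using mink_smul_left 0 0 w

lemma HasDerivAt.mink_left {u : ℝ → Fin n → ℝ} {u' : Fin n → ℝ} {t : ℝ}
    (hu : HasDerivAt u u' t) (w : Fin n → ℝ) :
    HasDerivAt (fun s => mink (u s) w) (mink u' w) t := by
  simp only [mink_eq_sum_mul]
  exact HasDerivAt.fun_sum fun j _ =>
    ((hasDerivAt_pi.1 hu j).const_mul _).mul_const _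

lemma HasDerivAt.matrix_mulVec {L : ℝ → Matrix (Fin n) (Fin n) ℝ} {L' : Matrix (Fin n) (Fin n) ℝ}
    {t : ℝ} (hL : ∀ i j, HasDerivAt (fun s => L s i j) (L' i j) t) (v : Fin n → ℝ) :
    HasDerivAt (fun s => L s *ᵥ v) (L' *ᵥ v) t :=
  hasDerivAt_pi.2 fun i => by
    simpa only [mulVec, dotProduct] using HasDerivAt.fun_sum fun j _ => (hL i j).mul_const (v j)

lemma mink_riccati_of_null_eigenvector {L L' B : Matrix (Fin n) (Fin n) ℝ} {t lam : ℝ}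
    {x : Fin n → ℝ} (hRic : t • L' + L * L - L + t ^ 2 • B = 0) (hnull : IsNull x)
    (heig : L *ᵥ x = lam • x) :
    t * mink (L' *ᵥ x) x + t ^ 2 * mink (B *ᵥ x) x = 0 := by
  have hvec : t • (L' *ᵥ x) + (lam * lam - lam) • x + t ^ 2 • (B *ᵥ x) = 0 := by
    have := congrArg (· *ᵥ x) hRic
    simp only [add_mulVec, sub_mulVec, smul_mulVec, ← mulVec_mulVec, heig, mulVec_smul,
      smul_smul, zero_mulVec] at this
    rw [← this, sub_smul]
    abel
  have hxx : mink x x = 0 := hnull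
  simpa only [mink_add_left, mink_smul_left, mink_zero_left, hxx, mul_zero, add_zero]
    using congrArg (mink · x) hvec

end Mink

theorem stmt_7_general {n : ℕ} (T : ℝ)
    (t₀ : ℝ) (ht₀ : t₀ ∈ Set.Ioc 0 T)
    (B L : ℝ → Matrix (Fin n) (Fin n) ℝ)
    (L' : Matrix (Fin n) (Fin n) ℝ)
    (hL' : ∀ i j, HasDerivAt (fun t => L t i j) (L' i j) t₀)
    (hRic : t₀ • L' + L t₀ * L t₀ - L t₀ + t₀ ^ 2 • B t₀ = 0)
    (x₀ : Fin n → ℝ) (hx₀ : x₀ ≠ 0) (hnull : IsNull x₀)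
    (lam : ℝ) (heig : (L t₀).mulVec x₀ = lam • x₀) :
    t₀ * deriv (fun t => -mink ((L t).mulVec x₀) x₀) t₀
        = t₀ ^ 2 * mink ((B t₀).mulVec x₀) x₀
      ∧ (NullNegDef (B t₀) → deriv (fun t => -mink ((L t).mulVec x₀) x₀) t₀ < 0) := by
  have hderiv : deriv (fun t => -mink ((L t).mulVec x₀) x₀) t₀ = -mink (L' *ᵥ x₀) x₀ :=
    ((HasDerivAt.matrix_mulVec hL' x₀).mink_left x₀).neg.deriv
  have hkey := mink_riccati_of_null_eigenvector hRic hnull heig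
  have ht : 0 < t₀ := ht₀.1
  refine ⟨by rw [hderiv]; linarith, fun hB => ?_⟩
  have hd : deriv (fun t => -mink ((L t).mulVec x₀) x₀) t₀ = t₀ * mink (B t₀ *ᵥ x₀) x₀ := by
    apply mul_left_cancel₀ ht.ne'
    rw [hderiv]
    linarith
  rw [hd]
  exact mul_neg_of_pos_of_neg ht (hB x₀ hx₀ hnull)

/-- along a nonzero null eigenvector `x₀` of `L(t₀)`, the Riccati
equation forces `t₀ f'(t₀) = t₀² ⟨B(t₀)x₀,x₀⟩` for `f(t) = -⟨L(t)x₀,x₀⟩`; in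
particular `f'(t₀) < 0` when `B(t₀)` is null negative-definite. -/
theorem stmt_7 {n : ℕ} (hn : 2 ≤ n) (T : ℝ) (hT : 0 < T)
    (t₀ : ℝ) (ht₀ : t₀ ∈ Set.Ioc 0 T)
    (B L : ℝ → Matrix (Fin n) (Fin n) ℝ)
    (L' : Matrix (Fin n) (Fin n) ℝ)
    (hL' : ∀ i j, HasDerivAt (fun t => L t i j) (L' i j) t₀)
    (hsymm : ∀ t ∈ Set.Icc (0 : ℝ) T, MinkSymm (L t))
    (hRic : t₀ • L' + L t₀ * L t₀ - L t₀ + t₀ ^ 2 • B t₀ = 0)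
    (x₀ : Fin n → ℝ) (hx₀ : x₀ ≠ 0) (hnull : IsNull x₀)
    (lam : ℝ) (heig : (L t₀).mulVec x₀ = lam • x₀) :
    t₀ * deriv (fun t => -mink ((L t).mulVec x₀) x₀) t₀
        = t₀ ^ 2 * mink ((B t₀).mulVec x₀) x₀
      ∧ (NullNegDef (B t₀) → deriv (fun t => -mink ((L t).mulVec x₀) x₀) t₀ < 0) :=
  stmt_7_general T t₀ ht₀ B L L' hL' hRic x₀ hx₀ hnull lam heig
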